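/- arXiv:2605.13622 — 2 statements merged into one kernel-verified Lean document; each statement's English description precedes it below -/
import Mathlib

section
/- If an integer n ≥ 2 has at least four distinct prime divisors, then the zero-divisor graph Γ(ℤ/nℤ) contains an induced matching of size two. -/
/-- The set of nonzero zero-divisors of a commutative ring. -/
def nzdSet (R : Type*) [CommRing R] : Set R :=
  {x | x ≠ 0 ∧ ∃ y : R, y ≠ 0 ∧ x * y = 0}

/-- The zero-divisor graph of a commutative ring: vertices are the nonzero
zero-divisors, and distinct vertices are adjacent iff their product is zero. -/
def zdGraph (R : Type*) [CommRing R] : SimpleGraph (nzdSet R) where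
  Adj x y := x ≠ y ∧ (x : R) * (y : R) = 0
  symm := ⟨fun x y h => ⟨h.1.symm, by rw [mul_comm]; exact h.2⟩⟩
  loopless := ⟨fun x h => h.1 rfl⟩

/-- An induced matching of size two: four distinct vertices `a, b, c, d` such that
`{a,b}` and `{c,d}` are edges while none of `{a,c}, {a,d}, {b,c}, {b,d}` is an edge. -/
def HasInducedMatchingTwo {V : Type*} (G : SimpleGraph V) : Prop :=
  ∃ a b c d : V, a ≠ b ∧ a ≠ c ∧ a ≠ d ∧ b ≠ c ∧ b ≠ d ∧ c ≠ d ∧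
    G.Adj a b ∧ G.Adj c d ∧ ¬ G.Adj a c ∧ ¬ G.Adj a d ∧ ¬ G.Adj b c ∧ ¬ G.Adj b d

/-! Write `n = P * Q * R * S` with pairwise coprime factors, none equal to `1` (the prime-power
parts of three prime factors of `n`, and the rest). In `ℤ/nℤ` the edges are `PQ — RS` and
`PR — QS`: each of the four cross products is coprime to one of the factors, so `n` does not
divide it, and both edges join distinct vertices because `P` divides one end but not the other. -/

theorem hasInducedMatchingTwo_zdGraph_of_mul_eq_zero {R : Type*} [CommRing R] {a b c d : R}
    (hab : a * b = 0) (hcd : c * d = 0) (hab' : a ≠ b) (hcd' : c ≠ d)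
    (hac : a * c ≠ 0) (had : a * d ≠ 0) (hbc : b * c ≠ 0) (hbd : b * d ≠ 0) :
    HasInducedMatchingTwo (zdGraph R) := by
  have ha := left_ne_zero_of_mul hac
  have hb := left_ne_zero_of_mul hbc
  have hc := right_ne_zero_of_mul hac
  have hd := right_ne_zero_of_mul had
  refine ⟨⟨a, ha, b, hb, hab⟩, ⟨b, hb, a, ha, mul_comm b a ▸ hab⟩,
    ⟨c, hc, d, hd, hcd⟩, ⟨d, hd, c, hc, mul_comm d c ▸ hcd⟩, ?_⟩
  simp only [zdGraph, ne_eq, Subtype.ext_iff, not_and]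
  refine ⟨hab', ?_, ?_, ?_, ?_, hcd', ⟨hab', hab⟩, ⟨hcd', hcd⟩, fun _ => hac, fun _ => had,
    fun _ => hbc, fun _ => hbd⟩
  all_goals rintro rfl
  exacts [had hcd, hac (mul_comm a c ▸ hcd), hbd hcd, hbc (mul_comm b c ▸ hcd)]

theorem ZMod.natCast_mul_natCast_eq_zero_iff {n x y : ℕ} :
    (x : ZMod n) * y = 0 ↔ n ∣ x * y := by
  rw [← Nat.cast_mul, ZMod.natCast_eq_zero_iff]

theorem ZMod.natCast_ne_natCast_of_dvd {n m x y : ℕ} (hm : m ∣ n) (hx : m ∣ x) (hy : ¬ m ∣ y) :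
    (x : ZMod n) ≠ y := fun h =>
  hy <| Nat.modEq_zero_iff_dvd.mp <|
    (((ZMod.natCast_eq_natCast_iff x y n).mp h).of_dvd hm).symm.trans
      (Nat.modEq_zero_iff_dvd.mpr hx)

theorem Nat.Coprime.not_dvd_of_dvd {k m n : ℕ} (hkm : k.Coprime m) (hk : k ≠ 1) (hkn : k ∣ n) :
    ¬ n ∣ m := fun h =>
  hk (hkm.eq_one_of_dvd (hkn.trans h))

theorem hasInducedMatchingTwo_zdGraph_zmod_mul_mul_mul {P Q R S : ℕ}
    (hP : P ≠ 1) (hQ : Q ≠ 1) (hR : R ≠ 1) (hS : S ≠ 1)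
    (hPQ : P.Coprime Q) (hPR : P.Coprime R) (hPS : P.Coprime S)
    (hQR : Q.Coprime R) (hQS : Q.Coprime S) (hRS : R.Coprime S) :
    HasInducedMatchingTwo (zdGraph (ZMod (P * Q * R * S))) := by
  have hPn : P ∣ P * Q * R * S := ⟨Q * R * S, by ring⟩
  have hQn : Q ∣ P * Q * R * S := ⟨P * R * S, by ring⟩
  have hRn : R ∣ P * Q * R * S := ⟨P * Q * S, by ring⟩
  have hSn : S ∣ P * Q * R * S := ⟨P * Q * R, by ring⟩
  refine hasInducedMatchingTwo_zdGraph_of_mul_eq_zero (a := ((P * Q : ℕ) : ZMod _))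
    (b := ((R * S : ℕ) : ZMod _)) (c := ((P * R : ℕ) : ZMod _)) (d := ((Q * S : ℕ) : ZMod _))
    ?_ ?_ ?_ ?_ ?_ ?_ ?_ ?_ <;>
    simp only [ne_eq, ZMod.natCast_mul_natCast_eq_zero_iff]
  · exact ⟨1, by ring⟩
  · exact ⟨1, by ring⟩
  · exact ZMod.natCast_ne_natCast_of_dvd hPn (dvd_mul_right P Q)
      ((hPR.mul_right hPS).not_dvd_of_dvd hP dvd_rfl)
  · exact ZMod.natCast_ne_natCast_of_dvd hPn (dvd_mul_right P R)
      ((hPQ.mul_right hPS).not_dvd_of_dvd hP dvd_rfl)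
  · exact ((hPS.symm.mul_right hQS.symm).mul_right (hPS.symm.mul_right hRS.symm)).not_dvd_of_dvd
      hS hSn
  · exact ((hPR.symm.mul_right hQR.symm).mul_right (hQR.symm.mul_right hRS)).not_dvd_of_dvd
      hR hRn
  · exact ((hQR.mul_right hQS).mul_right (hPQ.symm.mul_right hQR)).not_dvd_of_dvd hQ hQn
  · exact ((hPR.mul_right hPS).mul_right (hPQ.mul_right hPS)).not_dvd_of_dvd hP hPn

theorem Nat.exists_coprime_mul_eq_of_lt_card_primeFactors {n k : ℕ}
    (h : k < n.primeFactors.card) :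
    ∃ P m, P ≠ 1 ∧ P.Coprime m ∧ P * m = n ∧ k ≤ m.primeFactors.card := by
  obtain ⟨p, hp⟩ := Finset.card_pos.mp (k.zero_le.trans_lt h)
  obtain ⟨hp', hpn, hn⟩ := Nat.mem_primeFactors.mp hp
  have he : n.factorization p ≠ 0 := (hp'.factorization_pos_of_dvd hn hpn).ne'
  refine ⟨ordProj[p] n, ordCompl[p] n, (Nat.one_lt_pow he hp'.one_lt).ne',
    (Nat.coprime_ordCompl hp' hn).pow_left _, Nat.ordProj_mul_ordCompl_eq_self n p, ?_⟩
  have hsplit : n.primeFactors = {p} ∪ (ordCompl[p] n).primeFactors := by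
    conv_lhs => rw [← Nat.ordProj_mul_ordCompl_eq_self n p]
    rw [Nat.primeFactors_mul (Nat.ordProj_pos n p).ne' (Nat.ordCompl_pos p hn).ne',
      Nat.primeFactors_prime_pow he hp']
  have := hsplit ▸ Finset.card_union_le {p} (ordCompl[p] n).primeFactors
  rw [Finset.card_singleton] at this
  omega

theorem zdGraph_zmod_hasInducedMatchingTwo_of_four_primeFactors_general
    (n : ℕ) (h4 : 4 ≤ n.primeFactors.card) :
    HasInducedMatchingTwo (zdGraph (ZMod n)) := by
  obtain ⟨P, m, hP, hPm, rfl, hm⟩ := Nat.exists_coprime_mul_eq_of_lt_card_primeFactors h4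
  obtain ⟨Q, m', hQ, hQm', rfl, hm'⟩ := Nat.exists_coprime_mul_eq_of_lt_card_primeFactors hm
  obtain ⟨R, S, hR, hRS, rfl, hS⟩ := Nat.exists_coprime_mul_eq_of_lt_card_primeFactors hm'
  have hS1 : S ≠ 1 := by
    rintro rfl
    simp at hS
  rw [Nat.coprime_mul_iff_right, Nat.coprime_mul_iff_right] at hPm
  rw [Nat.coprime_mul_iff_right] at hQm'
  rw [← mul_assoc, ← mul_assoc]
  exact hasInducedMatchingTwo_zdGraph_zmod_mul_mul_mul hP hQ hR hS1
    hPm.1 hPm.2.1 hPm.2.2 hQm'.1 hQm'.2 hRS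

/-- If `n ≥ 2` has at least four distinct prime divisors, then
`Γ(ℤ/nℤ)` contains an induced matching of size two. -/
theorem zdGraph_zmod_hasInducedMatchingTwo_of_four_primeFactors
    (n : ℕ) (hn : 2 ≤ n) (h4 : 4 ≤ n.primeFactors.card) :
    HasInducedMatchingTwo (zdGraph (ZMod n)) :=
  zdGraph_zmod_hasInducedMatchingTwo_of_four_primeFactors_general n h4
end

section
/- Let n = p^a·q^b where p and q are distinct primes and a, b ≥ 2. Then the zero-divisor graph Γ(ℤ/nℤ) is not cochordal; indeed it contains an induced matching of size two. -/
/-- `G` has an induced cycle on `n` vertices: an injection of `ZMod n` into the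
vertices such that adjacency holds exactly between cyclically consecutive indices. -/
def HasInducedCycle {V : Type*} (G : SimpleGraph V) (n : ℕ) : Prop :=
  ∃ f : ZMod n → V, Function.Injective f ∧
    ∀ i j : ZMod n, G.Adj (f i) (f j) ↔ (j = i + 1 ∨ i = j + 1)

/-- A graph is chordal if it has no induced cycle of length at least `4`. -/
def IsChordal {V : Type*} (G : SimpleGraph V) : Prop :=
  ∀ n : ℕ, 4 ≤ n → ¬ HasInducedCycle G n

/-- A graph is cochordal if its complement is chordal. -/
def IsCochordal {V : Type*} (G : SimpleGraph V) : Prop :=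
  IsChordal Gᶜ

/-! In `ℤ/p^a q^b` the edges `{p^a, q^b}` and `{p^(a-1) q^(b-1), -pq}` form an induced matching:
each cross product is `± p^i q^j` with `i < a` or `j < b`, hence nonzero. The sign keeps the
last two vertices apart when `a = b = 2`, since `0 < p^(a-1) q^(b-1) + pq < p^a q^b`.
An induced matching `{a, b}, {c, d}` of `G` is an induced `4`-cycle `a, c, b, d` of `Gᶜ`. -/

section

variable {V : Type*} {G : SimpleGraph V}

theorem HasInducedMatchingTwo.hasInducedCycle_compl (h : HasInducedMatchingTwo G) :
    HasInducedCycle Gᶜ 4 := by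
  obtain ⟨a, b, c, d, hab, hac, had, hbc, hbd, hcd, Gab, Gcd, Gac, Gad, Gbc, Gbd⟩ := h
  have cases4 (i : ZMod 4) : i = 0 ∨ i = 1 ∨ i = 2 ∨ i = 3 := by revert i; decide
  refine ⟨![a, c, b, d], fun i j hij => ?_, fun i j => ?_⟩
  · rcases cases4 i with rfl | rfl | rfl | rfl <;> rcases cases4 j with rfl | rfl | rfl | rfl <;>
      simp_all [eq_comm]
  · rcases cases4 i with rfl | rfl | rfl | rfl <;> rcases cases4 j with rfl | rfl | rfl | rfl <;>
      simp_all [SimpleGraph.compl_adj, eq_comm, G.adj_comm] <;> decide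

theorem HasInducedMatchingTwo.not_isCochordal (h : HasInducedMatchingTwo G) : ¬ IsCochordal G :=
  fun hG => hG 4 le_rfl h.hasInducedCycle_compl

end

theorem zdGraph_hasInducedMatchingTwo {R : Type*} [CommRing R] {a b c d : R}
    (hab : a ≠ b) (hcd : c ≠ d) (hab0 : a * b = 0) (hcd0 : c * d = 0)
    (hac : a * c ≠ 0) (had : a * d ≠ 0) (hbc : b * c ≠ 0) (hbd : b * d ≠ 0) :
    HasInducedMatchingTwo (zdGraph R) := by
  have mem {x y z : R} (hxy : x * y = 0) (hxz : x * z ≠ 0) (hyz : y * z ≠ 0) : x ∈ nzdSet R :=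
    ⟨left_ne_zero_of_mul hxz, y, left_ne_zero_of_mul hyz, hxy⟩
  refine ⟨⟨a, mem hab0 hac hbc⟩, ⟨b, mem (mul_comm a b ▸ hab0) hbc hac⟩,
    ⟨c, mem hcd0 (mul_comm a c ▸ hac) (mul_comm a d ▸ had)⟩,
    ⟨d, mem (mul_comm c d ▸ hcd0) (mul_comm a d ▸ had) (mul_comm a c ▸ hac)⟩,
    ?_, ?_, ?_, ?_, ?_, ?_, ⟨?_, hab0⟩, ⟨?_, hcd0⟩, fun h => hac h.2, fun h => had h.2,
    fun h => hbc h.2, fun h => hbd h.2⟩ <;> simp only [ne_eq, Subtype.mk.injEq]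
  -- an endpoint shared by both edges would make one of the cross products vanish
  all_goals first | assumption | (rintro rfl; simp_all [mul_comm])

theorem Nat.not_pow_dvd_mul_pow_of_coprime {q m b j : ℕ} (hq : 1 < q) (hm : q.Coprime m)
    (hj : j < b) : ¬ q ^ b ∣ m * q ^ j := fun h =>
  hj.not_ge <| (Nat.pow_dvd_pow_iff_le_right hq).1 <|
    (Nat.Coprime.pow_left b hm).dvd_of_dvd_mul_left h

theorem ZMod.natCast_pow_mul_natCast_pow_ne_zero {p q a b i j : ℕ} (hp : 1 < p) (hq : 1 < q)
    (hpq : p.Coprime q) (h : i < a ∨ j < b) :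
    (p : ZMod (p ^ a * q ^ b)) ^ i * (q : ZMod (p ^ a * q ^ b)) ^ j ≠ 0 := by
  rw [← Nat.cast_pow, ← Nat.cast_pow, ← Nat.cast_mul, Ne, ZMod.natCast_eq_zero_iff]
  rcases h with hi | hj
  · exact fun hn => Nat.not_pow_dvd_mul_pow_of_coprime hp (hpq.pow_right j) hi
      (mul_comm (p ^ i) (q ^ j) ▸ (dvd_mul_right _ _).trans hn)
  · exact fun hn => Nat.not_pow_dvd_mul_pow_of_coprime hq (hpq.symm.pow_right i) hj
      ((dvd_mul_left _ _).trans hn)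

theorem zdGraph_zmod_pow_mul_pow_hasInducedMatchingTwo {p q a b : ℕ} (hp : 1 < p) (hq : 1 < q)
    (hpq : p.Coprime q) (ha : 2 ≤ a) (hb : 2 ≤ b) :
    HasInducedMatchingTwo (zdGraph (ZMod (p ^ a * q ^ b))) := by
  obtain ⟨a, rfl⟩ : ∃ k, a = k + 1 := ⟨a - 1, by omega⟩
  obtain ⟨b, rfl⟩ : ∃ k, b = k + 1 := ⟨b - 1, by omega⟩
  set P : ZMod (p ^ (a + 1) * q ^ (b + 1)) := (p : ZMod (p ^ (a + 1) * q ^ (b + 1)))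
  set Q : ZMod (p ^ (a + 1) * q ^ (b + 1)) := (q : ZMod (p ^ (a + 1) * q ^ (b + 1)))
  have hPQ : P ^ (a + 1) * Q ^ (b + 1) = 0 := by
    simp only [P, Q]
    exact_mod_cast ZMod.natCast_self (p ^ (a + 1) * q ^ (b + 1))
  have hne {i j : ℕ} (h : i < a + 1 ∨ j < b + 1) : P ^ i * Q ^ j ≠ 0 :=
    ZMod.natCast_pow_mul_natCast_pow_ne_zero hp hq hpq h
  have hsum_ne : P ^ a * Q ^ b + P * Q ≠ 0 := by
    have hmul_le : p * q ≤ p ^ a * q ^ b :=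
      Nat.mul_le_mul (Nat.le_self_pow (by omega) p) (Nat.le_self_pow (by omega) q)
    have hlt : p ^ a * q ^ b + p * q < p ^ (a + 1) * q ^ (b + 1) := by
      rw [show p ^ (a + 1) * q ^ (b + 1) = p * q * (p ^ a * q ^ b) by ring]
      nlinarith [Nat.mul_le_mul hp hq]
    simp only [P, Q]
    exact_mod_cast mt (ZMod.natCast_eq_zero_iff _ _).1
      (Nat.not_dvd_of_pos_of_lt (by positivity) hlt)
  refine zdGraph_hasInducedMatchingTwo (a := P ^ (a + 1)) (b := Q ^ (b + 1)) (c := P ^ a * Q ^ b)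
    (d := -(P * Q)) ?_ ?_ hPQ ?_ ?_ ?_ ?_ ?_
  · -- `p^a = q^b` would force `p^(2a) = p^a q^b = 0`
    intro h
    apply hne (i := 2 * (a + 1)) (j := 0) (by omega)
    rw [← hPQ, ← h]; ring
  · intro h
    exact hsum_ne (by rw [h]; ring)
  · rw [show P ^ a * Q ^ b * -(P * Q) = -(P ^ (a + 1) * Q ^ (b + 1)) by ring, hPQ, neg_zero]
  · rw [show P ^ (a + 1) * (P ^ a * Q ^ b) = P ^ (2 * a + 1) * Q ^ b by ring]
    exact hne (by omega)
  · rw [show P ^ (a + 1) * -(P * Q) = -(P ^ (a + 2) * Q ^ 1) by ring, neg_ne_zero]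
    exact hne (by omega)
  · rw [show Q ^ (b + 1) * (P ^ a * Q ^ b) = P ^ a * Q ^ (2 * b + 1) by ring]
    exact hne (by omega)
  · rw [show Q ^ (b + 1) * -(P * Q) = -(P ^ 1 * Q ^ (b + 2)) by ring, neg_ne_zero]
    exact hne (by omega)

/-- If `n = p^a·q^b` with `p, q` distinct primes and `a, b ≥ 2`,
then `Γ(ℤ/nℤ)` is not cochordal; indeed it contains an induced matching of size two. -/
theorem zdGraph_zmod_two_primes_not_cochordal
    (p q a b : ℕ) (hp : p.Prime) (hq : q.Prime) (hpq : p ≠ q)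
    (ha : 2 ≤ a) (hb : 2 ≤ b) :
    ¬ IsCochordal (zdGraph (ZMod (p ^ a * q ^ b))) ∧
      HasInducedMatchingTwo (zdGraph (ZMod (p ^ a * q ^ b))) := by
  have hmatch := zdGraph_zmod_pow_mul_pow_hasInducedMatchingTwo hp.one_lt hq.one_lt
    ((Nat.coprime_primes hp hq).2 hpq) ha hb
  exact ⟨hmatch.not_isCochordal, hmatch⟩
end
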